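/- Let X ⊆ ℝ^D be open, d ≥ 0, and f : X → ℝ. If f is (ρ^{(d)}→ρ_<^{(d)})-continuous, i.e., there exists a continuous function F defined on the set of all ρ^{(d)}-names of points of X such that for every x ∈ X and every ρ^{(d)}-name p of x, F(p) is a ρ_<^{(d)}-name of f(x), then f is lower semicontinuous. -/

import Mathlib

open Filter Topology

/- The name spaces `ℕ → ℚ` etc. carry the product topology with `ℚ` discrete. -/
local instance : TopologicalSpace ℚ := ⊥

/-- ρ-name of a real: `|x - q n| ≤ 2^{-n}` for all `n`. -/
def IsRhoName (q : ℕ → ℚ) (x : ℝ) : Prop :=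
  ∀ n : ℕ, |x - (q n : ℝ)| ≤ (2 : ℝ) ^ (-(n : ℤ))

/-- Iterated limits: `IterLim k q x` means the `(k+1)`-fold iterated limit of `q`
(variables paired via `Nat.pair`) exists at every stage and equals `x`. -/
def IterLim : ℕ → (ℕ → ℝ) → ℝ → Prop
  | 0, q, x => Filter.Tendsto q Filter.atTop (nhds x)
  | k+1, q, x => ∃ z : ℕ → ℝ,
      (∀ n, IterLim k (fun m => q (Nat.pair n m)) (z n)) ∧
      Filter.Tendsto z Filter.atTop (nhds x)

/-- ρ^{(k)}-name of a real: for `k = 0` a ρ-name, for `k ≥ 1` all iterated limits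
exist and the `k`-fold iterated limit equals `x`. -/
def IsRhoKName : ℕ → (ℕ → ℚ) → ℝ → Prop
  | 0, q, x => IsRhoName q x
  | k+1, q, x => IterLim k (fun n => (q n : ℝ)) x

/-- Alternating suprema/infima in `EReal`; `true` starts with a supremum.
`AltSupInf k b q` has `k+1` alternating sup/inf levels. -/
noncomputable def AltSupInf : ℕ → Bool → (ℕ → EReal) → EReal
  | 0, b, q => if b then ⨆ n, q n else ⨅ n, q n
  | k+1, b, q =>
      if b then ⨆ n, AltSupInf k false (fun m => q (Nat.pair n m))
      else ⨅ n, AltSupInf k true (fun m => q (Nat.pair n m))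

/-- ρ_<^{(k)}-name of a real: `x = sup inf sup ⋯` (`k+1` alternating sup/inf,
starting with sup, taken in ℝ ∪ {±∞}). -/
noncomputable def IsRhoLtKName (k : ℕ) (q : ℕ → ℚ) (x : ℝ) : Prop :=
  (x : EReal) = AltSupInf k true (fun n => ((q n : ℝ) : EReal))

/-- ρ-name of a point of ℝ^D: `|x - q n| ≤ 2^{-n}` for all `n`. -/
def IsRhoVecName (D : ℕ) (q : ℕ → (Fin D → ℚ)) (x : EuclideanSpace ℝ (Fin D)) : Prop :=
  ∀ n : ℕ, dist x (WithLp.toLp 2 (fun i => ((q n i : ℝ))) : EuclideanSpace ℝ (Fin D)) ≤ (2 : ℝ) ^ (-(n : ℤ))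

/-- Iterated limits in ℝ^D: `IterLimVec D k q x` means the `(k+1)`-fold iterated
limit of `q` (variables paired via `Nat.pair`) exists at every stage and equals `x`. -/
def IterLimVec (D : ℕ) :
    ℕ → (ℕ → EuclideanSpace ℝ (Fin D)) → EuclideanSpace ℝ (Fin D) → Prop
  | 0, q, x => Filter.Tendsto q Filter.atTop (nhds x)
  | k+1, q, x => ∃ z : ℕ → EuclideanSpace ℝ (Fin D),
      (∀ n, IterLimVec D k (fun m => q (Nat.pair n m)) (z n)) ∧
      Filter.Tendsto z Filter.atTop (nhds x)

/-- ρ^{(k)}-name of a point of ℝ^D: for `k = 0` a ρ-name, for `k ≥ 1` all iterated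
limits exist and the `k`-fold iterated limit equals `x`. -/
def IsRhoKVecName (D : ℕ) :
    ℕ → (ℕ → (Fin D → ℚ)) → EuclideanSpace ℝ (Fin D) → Prop
  | 0, q, x => IsRhoVecName D q x
  | k+1, q, x =>
      IterLimVec D k (fun n => (WithLp.toLp 2 (fun i => ((q n i : ℝ))) : EuclideanSpace ℝ (Fin D))) x

namespace Stmt10

open Classical

local instance : DiscreteTopology ℚ := ⟨rfl⟩

abbrev B := ℕ → ℕ

/-- prefix agreement -/
def Agr (N : ℕ) (α β : B) : Prop := ∀ i < N, β i = α i

lemma Agr.mono {N N' : ℕ} (h : N ≤ N') {α β : B} (hA : Agr N' α β) : Agr N α β :=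
  fun i hi => hA i (lt_of_lt_of_le hi h)

/-- prefix-open sets -/
def Op (A : Set B) : Prop := ∀ α ∈ A, ∃ N, ∀ β, Agr N α β → β ∈ A

lemma Op_univ : Op (Set.univ) := fun _ _ => ⟨0, fun _ _ => trivial⟩
lemma Op_empty : Op (∅ : Set B) := fun _ h => absurd h (Set.notMem_empty _)

lemma Op_iUnion {ι : Sort*} {A : ι → Set B} (h : ∀ i, Op (A i)) : Op (⋃ i, A i) := by
  intro α hα
  rcases Set.mem_iUnion.mp hα with ⟨i, hi⟩
  rcases h i α hi with ⟨N, hN⟩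
  exact ⟨N, fun β hβ => Set.mem_iUnion.mpr ⟨i, hN β hβ⟩⟩

/-- cylinder described by a list -/
def pcyl (l : List ℕ) : Set B := {α | ∀ i, (h : i < l.length) → α i = l[i]}

def prefList (α : B) (N : ℕ) : List ℕ := List.ofFn (fun i : Fin N => α i)

@[simp] lemma prefList_length (α : B) (N : ℕ) : (prefList α N).length = N := by
  simp [prefList]

lemma mem_pcyl_prefList_iff {α β : B} {N : ℕ} : β ∈ pcyl (prefList α N) ↔ Agr N α β := by
  constructor
  · intro h i hi
    have := h i (by simpa [prefList] using hi)
    simpa [prefList] using this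
  · intro h i hi
    have hi' : i < N := by simpa [prefList] using hi
    simpa [prefList] using h i hi'

lemma Op_pcyl (l : List ℕ) : Op (pcyl l) := by
  intro α hα
  refine ⟨l.length, fun β hβ i hi => ?_⟩
  rw [hβ i hi]; exact hα i hi

lemma Op_compl_pcyl (l : List ℕ) : Op ((pcyl l)ᶜ) := by
  intro α hα
  simp only [Set.mem_compl_iff, pcyl, Set.mem_setOf_eq, not_forall] at hα
  rcases hα with ⟨i, hi, hne⟩
  refine ⟨l.length, fun β hβ hmem => ?_⟩
  exact hne (by rw [← hβ i hi]; exact hmem i hi)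

/-- finite-level classes: `SIG 0` = open, `SIG (k+1)` = countable unions of complements
of `SIG k` sets.  (`SIG k` corresponds to `Σ⁰_{k+1}`.) -/
inductive SIG : ℕ → Set B → Prop
  | zero {A : Set B} : Op A → SIG 0 A
  | succ {k : ℕ} (C : ℕ → Set B) : (∀ n, SIG k (C n)) → SIG (k+1) (⋃ n, (C n)ᶜ)

lemma SIG.ofEq {k : ℕ} {A A' : Set B} (h : SIG k A) (he : A = A') : SIG k A' := he ▸ h

lemma SIG_zero_iff {A : Set B} : SIG 0 A ↔ Op A := by
  constructor
  · intro h; cases h; assumption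
  · exact SIG.zero

lemma SIG_succ_iff {k : ℕ} {A : Set B} :
    SIG (k+1) A ↔ ∃ C : ℕ → Set B, (∀ n, SIG k (C n)) ∧ A = ⋃ n, (C n)ᶜ := by
  constructor
  · intro h
    cases h with
    | succ C hC => exact ⟨C, hC, rfl⟩
  · rintro ⟨C, hC, rfl⟩; exact SIG.succ C hC

/-- every prefix-open set belongs to every level -/
lemma SIG_of_Op : ∀ (k : ℕ) {A : Set B}, Op A → SIG k A := by
  intro k
  induction k with
  | zero => exact fun h => SIG.zero h
  | succ k ih =>
    intro A hA
    classical
    set E : ℕ → Set B := fun j =>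
      (Encodable.decode (α := List ℕ) j).elim ∅
        (fun l => if pcyl l ⊆ A then pcyl l else ∅) with hE
    have hEspec : ∀ j, E j = (Encodable.decode (α := List ℕ) j).elim ∅
        (fun l => if pcyl l ⊆ A then pcyl l else ∅) := fun j => rfl
    have hAE : A = ⋃ j, ((E j)ᶜ)ᶜ := by
      ext α
      simp only [compl_compl, Set.mem_iUnion]
      constructor
      · intro hα
        rcases hA α hα with ⟨N, hN⟩
        refine ⟨Encodable.encode (prefList α N), ?_⟩
        have hsub : pcyl (prefList α N) ⊆ A := by
          intro β hβ; exact hN β (mem_pcyl_prefList_iff.mp hβ)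
        have hmem : α ∈ pcyl (prefList α N) := mem_pcyl_prefList_iff.mpr (fun i _ => rfl)
        rw [hEspec, Encodable.encodek, Option.elim_some, if_pos hsub]
        exact hmem
      · rintro ⟨j, hj⟩
        rw [hEspec] at hj
        rcases hdec : (Encodable.decode (α := List ℕ) j) with _ | l
        · rw [hdec, Option.elim_none] at hj; exact absurd hj (Set.notMem_empty _)
        · rw [hdec, Option.elim_some] at hj
          by_cases hs : pcyl l ⊆ A
          · rw [if_pos hs] at hj; exact hs hj
          · rw [if_neg hs] at hj; exact absurd hj (Set.notMem_empty _)
    refine (SIG.succ (fun j => (E j)ᶜ) (fun j => ih ?_)).ofEq hAE.symm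
    rcases hdec : (Encodable.decode (α := List ℕ) j) with _ | l
    · have hEj : E j = ∅ := by rw [hEspec, hdec, Option.elim_none]
      show Op ((E j)ᶜ)
      rw [hEj]; simpa using Op_univ
    · by_cases hs : pcyl l ⊆ A
      · have hEj : E j = pcyl l := by rw [hEspec, hdec, Option.elim_some, if_pos hs]
        show Op ((E j)ᶜ)
        rw [hEj]; exact Op_compl_pcyl l
      · have hEj : E j = ∅ := by rw [hEspec, hdec, Option.elim_some, if_neg hs]
        show Op ((E j)ᶜ)
        rw [hEj]; simpa using Op_univ

lemma SIG_univ (k : ℕ) : SIG k (Set.univ) := SIG_of_Op k Op_univ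
lemma SIG_empty (k : ℕ) : SIG k (∅ : Set B) := SIG_of_Op k Op_empty

/-- countable unions -/
lemma SIG_iUnion {k : ℕ} {A : ℕ → Set B} (h : ∀ n, SIG k (A n)) : SIG k (⋃ n, A n) := by
  cases k with
  | zero =>
    exact SIG.zero (Op_iUnion (fun n => SIG_zero_iff.mp (h n)))
  | succ k =>
    choose C hC hCeq using fun n => SIG_succ_iff.mp (h n)
    have : (⋃ n, A n) = ⋃ j, ((C (Nat.unpair j).1 (Nat.unpair j).2)ᶜ) := by
      ext α
      simp only [Set.mem_iUnion]
      constructor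
      · rintro ⟨n, hn⟩
        rw [hCeq n] at hn
        rcases Set.mem_iUnion.mp hn with ⟨i, hi⟩
        exact ⟨Nat.pair n i, by simpa [Nat.unpair_pair] using hi⟩
      · rintro ⟨j, hj⟩
        refine ⟨(Nat.unpair j).1, ?_⟩
        rw [hCeq]
        exact Set.mem_iUnion.mpr ⟨(Nat.unpair j).2, hj⟩
    exact (SIG.succ _ (fun j => hC _ _)).ofEq this.symm

/-- unions over an encodable index -/
lemma SIG_iUnion_enc {ι : Type} [Encodable ι] {k : ℕ} {A : ι → Set B}
    (h : ∀ i, SIG k (A i)) : SIG k (⋃ i, A i) := by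
  classical
  have heq : (⋃ i, A i) = ⋃ j : ℕ, ((Encodable.decode (α := ι) j).elim (∅ : Set B) A) := by
    ext α
    simp only [Set.mem_iUnion]
    constructor
    · rintro ⟨i, hi⟩
      refine ⟨Encodable.encode i, ?_⟩
      rw [Encodable.encodek, Option.elim_some]; exact hi
    · rintro ⟨j, hj⟩
      rcases hdec : (Encodable.decode (α := ι) j) with _ | i
      · rw [hdec, Option.elim_none] at hj; exact absurd hj (Set.notMem_empty _)
      · rw [hdec, Option.elim_some] at hj; exact ⟨i, hj⟩
  refine (SIG_iUnion (fun j => ?_)).ofEq heq.symm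
  rcases (Encodable.decode (α := ι) j) with _ | i
  · rw [Option.elim_none]; exact SIG_empty k
  · rw [Option.elim_some]; exact h i

/-- union-of-complements constructor over an encodable index -/
lemma SIG_succ_enc {ι : Type} [Encodable ι] {k : ℕ} {C : ι → Set B}
    (h : ∀ i, SIG k (C i)) : SIG (k+1) (⋃ i, (C i)ᶜ) := by
  classical
  have heq : (⋃ i, (C i)ᶜ)
      = ⋃ j : ℕ, ((Encodable.decode (α := ι) j).elim (Set.univ : Set B) C)ᶜ := by
    ext α
    simp only [Set.mem_iUnion]
    constructor
    · rintro ⟨i, hi⟩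
      refine ⟨Encodable.encode i, ?_⟩
      rw [Encodable.encodek, Option.elim_some]; exact hi
    · rintro ⟨j, hj⟩
      rcases hdec : (Encodable.decode (α := ι) j) with _ | i
      · rw [hdec, Option.elim_none] at hj; simp at hj
      · rw [hdec, Option.elim_some] at hj; exact ⟨i, hj⟩
  refine (SIG.succ _ (fun j => ?_)).ofEq heq.symm
  rcases (Encodable.decode (α := ι) j) with _ | i
  · rw [Option.elim_none]; exact SIG_univ k
  · rw [Option.elim_some]; exact h i

/-- monotonicity in the level -/
lemma SIG_mono {k : ℕ} {A : Set B} (h : SIG k A) : SIG (k+1) A := by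
  induction h with
  | zero hOp => exact SIG_of_Op 1 hOp
  | succ C hC ih => exact SIG.succ C ih

/-- renamings -/
def ren (σ : ℕ → ℕ) (α : B) : B := fun i => α (σ i)

lemma SIG_preim_ren {k : ℕ} {A : Set B} (h : SIG k A) (σ : ℕ → ℕ) :
    SIG k {α | ren σ α ∈ A} := by
  induction h with
  | zero hOp =>
    refine SIG.zero ?_
    intro α hα
    rcases hOp (ren σ α) hα with ⟨N, hN⟩
    refine ⟨(Finset.range N).sup σ + 1, fun β hβ => ?_⟩
    refine hN (ren σ β) (fun i hi => ?_)
    have : σ i ≤ (Finset.range N).sup σ := Finset.le_sup (Finset.mem_range.mpr hi)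
    exact hβ (σ i) (Nat.lt_succ_of_le this)
  | succ C hC ih =>
    have : {α | ren σ α ∈ ⋃ n, (C n)ᶜ} = ⋃ n, ({α | ren σ α ∈ C n})ᶜ := by
      ext α; simp [Set.mem_iUnion]
    exact (SIG.succ _ (fun n => ih n)).ofEq this.symm

/-! ### universal sets -/

def σ2 (n : ℕ) (j : ℕ) : ℕ := if j % 2 = 0 then 2 * Nat.pair n (j / 2) else j

def itl (β α : B) : B := fun j => if j % 2 = 0 then β (j / 2) else α (j / 2)

@[simp] lemma itl_even (β α : B) (i : ℕ) : itl β α (2 * i) = β i := by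
  simp [itl, Nat.mul_div_cancel_left i (by norm_num : 0 < 2), Nat.mul_mod_right]

@[simp] lemma itl_odd (β α : B) (i : ℕ) : itl β α (2 * i + 1) = α i := by
  have h1 : (2 * i + 1) % 2 = 1 := by omega
  have h2 : (2 * i + 1) / 2 = i := by omega
  simp [itl, h1, h2]

lemma ren_σ2_itl (n : ℕ) (β α : B) :
    ren (σ2 n) (itl β α) = itl (fun m => β (Nat.pair n m)) α := by
  funext j
  by_cases h : j % 2 = 0
  · have : ren (σ2 n) (itl β α) j = itl β α (2 * Nat.pair n (j / 2)) := by
      simp [ren, σ2, h]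
    rw [this, itl_even]
    simp [itl, h]
  · have : ren (σ2 n) (itl β α) j = itl β α j := by simp [ren, σ2, h]
    rw [this]
    simp [itl, h]

def U : ℕ → Set B
  | 0 => {γ | ∃ l : List ℕ, γ (2 * Encodable.encode l) = 1 ∧
      ∀ i, (h : i < l.length) → γ (2 * i + 1) = l[i]}
  | (k+1) => ⋃ n, ({γ | ren (σ2 n) γ ∈ U k})ᶜ

lemma SIG_U : ∀ k, SIG k (U k) := by
  intro k
  induction k with
  | zero =>
    refine SIG.zero ?_
    intro γ hγ
    rcases hγ with ⟨l, h1, h2⟩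
    refine ⟨max (2 * Encodable.encode l + 1) (2 * l.length + 1), fun β hβ => ?_⟩
    refine ⟨l, ?_, ?_⟩
    · rw [hβ _ (lt_of_lt_of_le (Nat.lt_succ_self _) (le_max_left _ _))]; exact h1
    · intro i hi
      rw [hβ (2 * i + 1) (lt_of_lt_of_le (by omega) (le_max_right _ _))]
      exact h2 i hi
  | succ k ih =>
    exact SIG.succ _ (fun n => SIG_preim_ren ih (σ2 n))

lemma UNIV : ∀ (k : ℕ) (A : Set B), SIG k A → ∃ β : B, ∀ α, (α ∈ A ↔ itl β α ∈ U k) := by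
  intro k
  induction k with
  | zero =>
    intro A hA
    have hOp := SIG_zero_iff.mp hA
    classical
    refine ⟨fun j => if ∃ l : List ℕ, j = Encodable.encode l ∧ pcyl l ⊆ A then 1 else 0,
      fun α => ?_⟩
    constructor
    · intro hα
      rcases hOp α hα with ⟨N, hN⟩
      have hsub : pcyl (prefList α N) ⊆ A := fun β hβ => hN β (mem_pcyl_prefList_iff.mp hβ)
      refine ⟨prefList α N, ?_, ?_⟩
      · rw [itl_even, if_pos ⟨prefList α N, rfl, hsub⟩]
      · intro i hi
        rw [itl_odd]
        have : α ∈ pcyl (prefList α N) := mem_pcyl_prefList_iff.mpr (fun i _ => rfl)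
        exact this i hi
    · rintro ⟨l, h1, h2⟩
      rw [itl_even] at h1
      by_cases hcond : ∃ l' : List ℕ, Encodable.encode l = Encodable.encode l' ∧ pcyl l' ⊆ A
      · rcases hcond with ⟨l', hll', hsub⟩
        have : l = l' := Encodable.encode_injective hll'
        subst this
        refine hsub (fun i hi => ?_)
        have := h2 i hi
        rwa [itl_odd] at this
      · rw [if_neg hcond] at h1; exact absurd h1 (by norm_num)
  | succ k ih =>
    intro A hA
    rcases SIG_succ_iff.mp hA with ⟨C, hC, rfl⟩
    choose βr hβr using fun n => ih (C n) (hC n)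
    refine ⟨fun t => βr (Nat.unpair t).1 ((Nat.unpair t).2), fun α => ?_⟩
    have key : ∀ n, ren (σ2 n) (itl (fun t => βr (Nat.unpair t).1 (Nat.unpair t).2) α)
        = itl (βr n) α := by
      intro n
      rw [ren_σ2_itl]
      have harg : (fun m => (fun t => βr (Nat.unpair t).1 (Nat.unpair t).2) (Nat.pair n m))
          = βr n := by
        funext m
        simp only [Nat.unpair_pair]
      rw [harg]
    constructor
    · intro hα
      rcases Set.mem_iUnion.mp hα with ⟨n, hn⟩
      show _ ∈ ⋃ n, _
      refine Set.mem_iUnion.mpr ⟨n, ?_⟩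
      intro hmem
      rw [Set.mem_setOf_eq, key n] at hmem
      exact hn ((hβr n α).mpr hmem)
    · intro hmem
      rcases Set.mem_iUnion.mp hmem with ⟨n, hn⟩
      refine Set.mem_iUnion.mpr ⟨n, fun hCn => ?_⟩
      refine hn ?_
      rw [Set.mem_setOf_eq, key n]
      exact (hβr n α).mp hCn

/-- the diagonal set is not in `SIG k` -/
lemma DIAG (k : ℕ) : ¬ SIG k {α | itl α α ∉ U k} := by
  intro h
  rcases UNIV k _ h with ⟨β, hβ⟩
  have := hβ β
  simp only [Set.mem_setOf_eq] at this
  tauto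



/-! ### iterated limits of locally constant `ℕ∞`-valued functions -/

/-- convergence in `ℕ∞` (to `⊤` means escape to infinity) -/
def Cv (s : ℕ → ℕ∞) (L : ℕ∞) : Prop :=
  (L = ⊤ → ∀ K : ℕ, ∃ N, ∀ n, N ≤ n → (K : ℕ∞) ≤ s n) ∧
  (L ≠ ⊤ → ∃ N, ∀ n, N ≤ n → s n = L)

lemma Cv_of_eventually_eq {s : ℕ → ℕ∞} {L : ℕ∞} (h : ∃ N, ∀ n, N ≤ n → s n = L) :
    Cv s L := by
  constructor
  · rintro rfl K
    rcases h with ⟨N, hN⟩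
    exact ⟨N, fun n hn => by rw [hN n hn]; exact le_top⟩
  · intro _; exact h

def LocCst {γ : Type*} (T : B → γ) : Prop := ∀ α, ∃ N, ∀ β, Agr N α β → T β = T α

inductive RK : ℕ → (B → ℕ∞) → Prop
  | zero {T} : LocCst T → RK 0 T
  | succ {k} {T} (S : ℕ → B → ℕ∞) : (∀ n, RK k (S n)) →
      (∀ α, Cv (fun n => S n α) (T α)) → RK (k+1) T

lemma RK_zero_iff {T : B → ℕ∞} : RK 0 T ↔ LocCst T := by
  constructor
  · intro h; cases h; assumption
  · exact RK.zero

lemma RK_succ_iff {k : ℕ} {T : B → ℕ∞} :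
    RK (k+1) T ↔ ∃ S : ℕ → B → ℕ∞, (∀ n, RK k (S n)) ∧ ∀ α, Cv (fun n => S n α) (T α) := by
  constructor
  · intro h
    cases h with
    | succ S hS hCv => exact ⟨S, hS, hCv⟩
  · rintro ⟨S, hS, hCv⟩; exact RK.succ S hS hCv

/-- least-witness function with a pinned (classical) decidability instance -/
noncomputable def lfind {P : ℕ → Prop} (h : ∃ n, P n) : ℕ :=
  @Nat.find P (fun n => Classical.propDecidable (P n)) h

lemma lfind_spec {P : ℕ → Prop} (h : ∃ n, P n) : P (lfind h) :=
  @Nat.find_spec P (fun n => Classical.propDecidable (P n)) h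

lemma lfind_min' {P : ℕ → Prop} (h : ∃ n, P n) {m : ℕ} (hm : P m) : lfind h ≤ m :=
  @Nat.find_min' P (fun n => Classical.propDecidable (P n)) h m hm

lemma lfind_min {P : ℕ → Prop} (h : ∃ n, P n) {m : ℕ} (hm : m < lfind h) : ¬ P m :=
  @Nat.find_min P (fun n => Classical.propDecidable (P n)) h m hm

/-- classical dependent if with pinned instance -/
noncomputable def cif (c : Prop) (f : c → ℕ∞) (e : ℕ∞) : ℕ∞ :=
  @dite _ c (Classical.propDecidable c) f (fun _ => e)

lemma cif_pos {c : Prop} {f : c → ℕ∞} {e : ℕ∞} (hc : c) : cif c f e = f hc := dif_pos hc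

lemma cif_neg {c : Prop} {f : c → ℕ∞} {e : ℕ∞} (hc : ¬ c) : cif c f e = e := dif_neg hc

lemma find_congr' {P Q : ℕ → Prop} (h : ∀ n, P n ↔ Q n) (hP : ∃ n, P n) (hQ : ∃ n, Q n) :
    lfind hP = lfind hQ := by
  refine le_antisymm ?_ ?_
  · exact lfind_min' hP ((h _).mpr (lfind_spec hQ))
  · exact lfind_min' hQ ((h _).mp (lfind_spec hP))

/-- combination lemma: applying a finitary threshold functional to `RK k` functions
stays in `RK k` -/
lemma RK_comb : ∀ (k : ℕ) (g : ℕ → B → ℕ∞), (∀ n, RK k (g n)) →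
    ∀ (m : ℕ) (Φ : (ℕ → Prop) → ℕ∞),
    (∀ P Q : ℕ → Prop, (∀ i, i ≤ m → (P i ↔ Q i)) → Φ P = Φ Q) →
    ∀ (θ : ℕ → ℕ∞) (F : B → ℕ∞), (∀ α, F α = Φ (fun i => g i α ≤ θ i)) → RK k F := by
  intro k
  induction k with
  | zero =>
    intro g hg m Φ hΦ θ F hF
    refine RK.zero ?_
    intro α
    have hloc : ∀ i, ∃ N, ∀ β, Agr N α β → g i β = g i α := by
      intro i
      cases hg i with
      | zero h => exact h α
    choose N hN using hloc
    refine ⟨(Finset.range (m+1)).sup N, fun β hβ => ?_⟩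
    rw [hF α, hF β]
    refine hΦ _ _ (fun i hi => ?_)
    have hle : N i ≤ (Finset.range (m+1)).sup N :=
      Finset.le_sup (Finset.mem_range.mpr (Nat.lt_succ_of_le hi))
    rw [hN i β (Agr.mono hle hβ)]
  | succ k ih =>
    intro g hg m Φ hΦ θ F hF
    choose S hS hCv using fun n => RK_succ_iff.mp (hg n)
    refine RK.succ (fun j α => Φ (fun i => S i j α ≤ θ i))
      (fun j => ih (fun i => S i j) (fun i => hS i j) m Φ hΦ θ _ (fun α => rfl)) ?_
    intro α
    have hstab : ∀ i, ∃ N, ∀ j, N ≤ j → ((S i j α ≤ θ i) ↔ (g i α ≤ θ i)) := by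
      intro i
      rcases hCv i α with ⟨htop, hfin⟩
      by_cases hgi : g i α = ⊤
      · by_cases hθ : θ i = ⊤
        · exact ⟨0, fun j _ => by simp [hθ]⟩
        · rcases WithTop.ne_top_iff_exists.mp hθ with ⟨c, hc⟩
          have hc' : θ i = ((c : ℕ) : ℕ∞) := hc.symm
          rcases htop hgi (c+1) with ⟨N, hN⟩
          refine ⟨N, fun j hj => ?_⟩
          have h1 : ¬ (S i j α ≤ θ i) := by
            intro hle
            have hle' : S i j α ≤ ((c : ℕ) : ℕ∞) := by rw [← hc']; exact hle
            have h2 : ((c+1 : ℕ) : ℕ∞) ≤ ((c : ℕ) : ℕ∞) := le_trans (hN j hj) hle'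
            exact absurd h2 (by exact_mod_cast Nat.not_succ_le_self c)
          have h2 : ¬ (g i α ≤ θ i) := by
            rw [hgi]
            intro hle
            exact hθ (top_le_iff.mp hle)
          exact iff_of_false h1 h2
      · rcases hfin hgi with ⟨N, hN⟩
        exact ⟨N, fun j hj => iff_of_eq (congrArg (fun x => x ≤ θ i) (hN j hj))⟩
    choose N hN using hstab
    rw [hF α]
    refine Cv_of_eventually_eq ⟨(Finset.range (m+1)).sup N, fun j hj => ?_⟩
    refine hΦ _ _ (fun i hi => ?_)
    have hle : N i ≤ (Finset.range (m+1)).sup N :=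
      Finset.le_sup (Finset.mem_range.mpr (Nat.lt_succ_of_le hi))
    exact hN i j (le_trans hle hj)

/-! ### realization of countable intersections -/

/-- stage-`m` verification that `α` is in the prefix-open set `C n` -/
def ver (C : ℕ → Set B) (n m : ℕ) (α : B) : Prop :=
  ∃ j ≤ m, ∃ l : List ℕ, Encodable.decode j = some l ∧ pcyl l ⊆ C n ∧ α ∈ pcyl l

lemma ver_mem {C : ℕ → Set B} {n m : ℕ} {α : B} (h : ver C n m α) : α ∈ C n := by
  rcases h with ⟨j, _, l, _, hsub, hmem⟩
  exact hsub hmem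

lemma ver_of_mem {C : ℕ → Set B} {n : ℕ} (hC : Op (C n)) {α : B} (h : α ∈ C n) :
    ∃ M, ∀ m, M ≤ m → ver C n m α := by
  rcases hC α h with ⟨N, hN⟩
  refine ⟨Encodable.encode (prefList α N), fun m hm => ?_⟩
  refine ⟨Encodable.encode (prefList α N), hm, prefList α N, Encodable.encodek _, ?_, ?_⟩
  · intro β hβ; exact hN β (mem_pcyl_prefList_iff.mp hβ)
  · exact mem_pcyl_prefList_iff.mpr (fun i _ => rfl)

def dlen (j : ℕ) : ℕ := (Encodable.decode (α := List ℕ) j).elim 0 List.length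

lemma ver_locCst (C : ℕ → Set B) (m : ℕ) :
    ∃ N, ∀ α β, Agr N α β → ∀ n, (ver C n m α ↔ ver C n m β) := by
  classical
  refine ⟨(Finset.range (m+1)).sup dlen, fun α β hαβ n => ?_⟩
  have key : ∀ (γ δ : B), Agr ((Finset.range (m+1)).sup dlen) γ δ →
      ver C n m γ → ver C n m δ := by
    intro γ δ hγδ hv
    rcases hv with ⟨j, hj, l, hdec, hsub, hmem⟩
    refine ⟨j, hj, l, hdec, hsub, fun i hi => ?_⟩
    have hd : dlen j = l.length := by
      unfold dlen; rw [hdec, Option.elim_some]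
    have hlen : l.length ≤ (Finset.range (m+1)).sup dlen := by
      rw [← hd]
      exact Finset.le_sup (Finset.mem_range.mpr (Nat.lt_succ_of_le hj))
    rw [hγδ i (lt_of_lt_of_le hi hlen)]
    exact hmem i hi
  constructor
  · exact key α β hαβ
  · refine key β α (fun i hi => (hαβ i hi).symm)

noncomputable def fm0 (C : ℕ → Set B) (m : ℕ) (α : B) : ℕ∞ :=
  cif (∃ n, ¬ ver C n m α) (fun h => ((lfind h : ℕ) : ℕ∞)) (m : ℕ∞)

noncomputable def T0 (C : ℕ → Set B) (α : B) : ℕ∞ :=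
  cif (∃ n, α ∉ C n) (fun h => ((lfind h : ℕ) : ℕ∞)) ⊤

lemma fm0_pos {C : ℕ → Set B} {m : ℕ} {α : B} (hx : ∃ n, ¬ ver C n m α) :
    fm0 C m α = ((lfind hx : ℕ) : ℕ∞) := cif_pos hx

lemma fm0_neg {C : ℕ → Set B} {m : ℕ} {α : B} (hx : ¬ ∃ n, ¬ ver C n m α) :
    fm0 C m α = (m : ℕ∞) := cif_neg hx

lemma T0_pos {C : ℕ → Set B} {α : B} (h : ∃ n, α ∉ C n) :
    T0 C α = ((lfind h : ℕ) : ℕ∞) := cif_pos h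

lemma T0_neg {C : ℕ → Set B} {α : B} (h : ¬ ∃ n, α ∉ C n) :
    T0 C α = ⊤ := cif_neg h

lemma fm0_locCst (C : ℕ → Set B) (m : ℕ) : LocCst (fm0 C m) := by
  classical
  intro α
  rcases ver_locCst C m with ⟨N, hN⟩
  refine ⟨N, fun β hβ => ?_⟩
  have hiff : ∀ n, (¬ ver C n m β) ↔ (¬ ver C n m α) :=
    fun n => not_congr (hN α β hβ n).symm
  by_cases h : ∃ n, ¬ ver C n m α
  · have h' : ∃ n, ¬ ver C n m β := by
      rcases h with ⟨n, hn⟩; exact ⟨n, (hiff n).mpr hn⟩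
    rw [fm0_pos h', fm0_pos h]
    exact congrArg (fun t : ℕ => (t : ℕ∞)) (find_congr' hiff h' h)
  · have h' : ¬ ∃ n, ¬ ver C n m β := by
      intro hc; rcases hc with ⟨n, hn⟩; exact h ⟨n, (hiff n).mp hn⟩
    rw [fm0_neg h', fm0_neg h]

lemma T0_top_iff (C : ℕ → Set B) (α : B) : T0 C α = ⊤ ↔ ∀ n, α ∈ C n := by
  classical
  by_cases h : ∃ n, α ∉ C n
  · rw [T0_pos h]
    refine iff_of_false (by simp) ?_
    rcases h with ⟨n, hn⟩
    intro hall
    exact hn (hall n)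
  · rw [T0_neg h]
    push_neg at h
    exact iff_of_true rfl h

lemma fm0_Cv (C : ℕ → Set B) (hC : ∀ n, Op (C n)) (α : B) :
    Cv (fun m => fm0 C m α) (T0 C α) := by
  classical
  have hstage : ∀ n, ∃ M, α ∈ C n → ∀ m, M ≤ m → ver C n m α := by
    intro n
    by_cases h : α ∈ C n
    · rcases ver_of_mem (hC n) h with ⟨M, hM⟩
      exact ⟨M, fun _ => hM⟩
    · exact ⟨0, fun h' => absurd h' h⟩
  choose M hM using hstage
  by_cases h : ∃ n, α ∉ C n
  · rw [T0_pos h]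
    have hJ : α ∉ C (lfind h) := lfind_spec h
    have hlt : ∀ n, n < lfind h → α ∈ C n := fun n hn => not_not.mp (lfind_min h hn)
    refine Cv_of_eventually_eq ⟨(Finset.range (lfind h)).sup M, fun m hm => ?_⟩
    have hval : ∀ n, n < lfind h → ver C n m α := by
      intro n hn
      refine hM n (hlt n hn) m (le_trans ?_ hm)
      exact Finset.le_sup (Finset.mem_range.mpr hn)
    have hx : ∃ n, ¬ ver C n m α := ⟨lfind h, fun hv => hJ (ver_mem hv)⟩
    show fm0 C m α = _
    rw [fm0_pos hx]
    have : lfind hx = lfind h :=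
      le_antisymm (lfind_min' hx (fun hv => hJ (ver_mem hv)))
        (le_of_not_gt (fun hcon => (lfind_spec hx) (hval _ hcon)))
    rw [this]
  · rw [T0_neg h]
    push_neg at h
    constructor
    · intro _ K
      refine ⟨max K ((Finset.range K).sup M), fun m hm => ?_⟩
      have hval : ∀ n, n < K → ver C n m α := by
        intro n hn
        refine hM n (h n) m (le_trans (le_trans ?_ (le_max_right _ _)) hm)
        exact Finset.le_sup (Finset.mem_range.mpr hn)
      show (K : ℕ∞) ≤ fm0 C m α
      by_cases hx : ∃ n, ¬ ver C n m α
      · rw [fm0_pos hx]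
        have : K ≤ lfind hx :=
          le_of_not_gt (fun hcon => (lfind_spec hx) (hval _ hcon))
        exact_mod_cast this
      · rw [fm0_neg hx]
        exact_mod_cast le_trans (le_max_left _ _) hm
    · intro h'; exact absurd rfl h'

noncomputable def fmS (g : ℕ → B → ℕ∞) (m : ℕ) (α : B) : ℕ∞ :=
  cif (∃ n, n ≤ m ∧ ¬ (g n α ≤ (m:ℕ∞))) (fun h => ((lfind h : ℕ) : ℕ∞)) (m : ℕ∞)

noncomputable def TS (g : ℕ → B → ℕ∞) (α : B) : ℕ∞ :=
  cif (∃ n, g n α = ⊤) (fun h => ((lfind h : ℕ) : ℕ∞)) ⊤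

lemma fmS_pos {g : ℕ → B → ℕ∞} {m : ℕ} {α : B}
    (hx : ∃ n, n ≤ m ∧ ¬ (g n α ≤ (m:ℕ∞))) :
    fmS g m α = ((lfind hx : ℕ) : ℕ∞) := cif_pos hx

lemma fmS_neg {g : ℕ → B → ℕ∞} {m : ℕ} {α : B}
    (hx : ¬ ∃ n, n ≤ m ∧ ¬ (g n α ≤ (m:ℕ∞))) :
    fmS g m α = (m : ℕ∞) := cif_neg hx

lemma TS_pos {g : ℕ → B → ℕ∞} {α : B} (h : ∃ n, g n α = ⊤) :
    TS g α = ((lfind h : ℕ) : ℕ∞) := cif_pos h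

lemma TS_neg {g : ℕ → B → ℕ∞} {α : B} (h : ¬ ∃ n, g n α = ⊤) :
    TS g α = ⊤ := cif_neg h

lemma TS_top_iff (g : ℕ → B → ℕ∞) (α : B) : TS g α = ⊤ ↔ ∀ n, g n α ≠ ⊤ := by
  classical
  by_cases h : ∃ n, g n α = ⊤
  · rw [TS_pos h]
    refine iff_of_false (by simp) ?_
    rcases h with ⟨n, hn⟩
    intro hall
    exact hall n hn
  · rw [TS_neg h]
    push_neg at h
    exact iff_of_true rfl h

lemma fmS_RK (k : ℕ) (g : ℕ → B → ℕ∞) (hg : ∀ n, RK k (g n)) (m : ℕ) :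
    RK k (fmS g m) := by
  have hΦ : ∀ P Q : ℕ → Prop, (∀ i, i ≤ m → (P i ↔ Q i)) →
      cif (∃ n, n ≤ m ∧ ¬ P n) (fun h => ((lfind h : ℕ) : ℕ∞)) (m : ℕ∞) =
      cif (∃ n, n ≤ m ∧ ¬ Q n) (fun h => ((lfind h : ℕ) : ℕ∞)) (m : ℕ∞) := by
    intro P Q hPQ
    have hiff : ∀ n, (n ≤ m ∧ ¬ P n) ↔ (n ≤ m ∧ ¬ Q n) := by
      intro n
      by_cases hn : n ≤ m
      · simp only [hn, true_and]
        exact not_congr (hPQ n hn)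
      · simp [hn]
    by_cases h : ∃ n, n ≤ m ∧ ¬ P n
    · have h' : ∃ n, n ≤ m ∧ ¬ Q n := by
        rcases h with ⟨n, hn⟩; exact ⟨n, (hiff n).mp hn⟩
      rw [cif_pos h, cif_pos h']
      exact congrArg (fun t : ℕ => (t : ℕ∞)) (find_congr' hiff h h')
    · have h' : ¬ ∃ n, n ≤ m ∧ ¬ Q n := by
        intro hc; rcases hc with ⟨n, hn⟩; exact h ⟨n, (hiff n).mpr hn⟩
      rw [cif_neg h, cif_neg h']
  exact RK_comb k g hg m
    (fun P => cif (∃ n, n ≤ m ∧ ¬ P n) (fun h => ((lfind h : ℕ) : ℕ∞)) (m : ℕ∞))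
    hΦ (fun _ => (m : ℕ∞)) (fmS g m) (fun α => rfl)

lemma fmS_Cv (g : ℕ → B → ℕ∞) (α : B) :
    Cv (fun m => fmS g m α) (TS g α) := by
  classical
  have hbd : ∀ n, ∃ c : ℕ, g n α ≠ ⊤ → g n α = (c : ℕ∞) := by
    intro n
    by_cases h : g n α = ⊤
    · exact ⟨0, fun h' => absurd h h'⟩
    · rcases WithTop.ne_top_iff_exists.mp h with ⟨c, hc⟩
      exact ⟨c, fun _ => hc.symm⟩
  choose c hc using hbd
  by_cases h : ∃ n, g n α = ⊤
  · rw [TS_pos h]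
    have hJ : g (lfind h) α = ⊤ := lfind_spec h
    have hlt : ∀ n, n < lfind h → g n α ≠ ⊤ := fun n hn => lfind_min h hn
    refine Cv_of_eventually_eq
      ⟨max (lfind h) ((Finset.range (lfind h)).sup c), fun m hm => ?_⟩
    have hsm : ∀ n, n < lfind h → g n α ≤ (m : ℕ∞) := by
      intro n hn
      rw [hc n (hlt n hn)]
      have h1 : c n ≤ (Finset.range (lfind h)).sup c :=
        Finset.le_sup (Finset.mem_range.mpr hn)
      exact_mod_cast le_trans (le_trans h1 (le_max_right _ _)) hm
    have htopm : ¬ (g (lfind h) α ≤ (m : ℕ∞)) := by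
      rw [hJ]; simp
    have hx : ∃ n, n ≤ m ∧ ¬ (g n α ≤ (m:ℕ∞)) :=
      ⟨lfind h, le_trans (le_max_left _ _) hm, htopm⟩
    show fmS g m α = _
    rw [fmS_pos hx]
    have : lfind hx = lfind h := by
      refine le_antisymm (lfind_min' hx ⟨le_trans (le_max_left _ _) hm, htopm⟩)
        (le_of_not_gt (fun hcon => (lfind_spec hx).2 (hsm _ hcon)))
    rw [this]
  · rw [TS_neg h]
    push_neg at h
    constructor
    · intro _ K
      refine ⟨max K ((Finset.range K).sup c), fun m hm => ?_⟩
      have hsm : ∀ n, n < K → g n α ≤ (m : ℕ∞) := by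
        intro n hn
        rw [hc n (h n)]
        have h1 : c n ≤ (Finset.range K).sup c := Finset.le_sup (Finset.mem_range.mpr hn)
        exact_mod_cast le_trans (le_trans h1 (le_max_right _ _)) hm
      show (K : ℕ∞) ≤ fmS g m α
      by_cases hx : ∃ n, n ≤ m ∧ ¬ (g n α ≤ (m:ℕ∞))
      · rw [fmS_pos hx]
        have : K ≤ lfind hx :=
          le_of_not_gt (fun hcon => (lfind_spec hx).2 (hsm _ hcon))
        exact_mod_cast this
      · rw [fmS_neg hx]
        exact_mod_cast le_trans (le_max_left _ _) hm
    · intro h'; exact absurd rfl h'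

/-- realization lemma: every countable intersection of `SIG k` sets is the `⊤`-fiber of
an `RK (k+1)` function -/
lemma REAL : ∀ (k : ℕ) (C : ℕ → Set B), (∀ n, SIG k (C n)) →
    ∃ T : B → ℕ∞, RK (k+1) T ∧ ∀ α, (T α = ⊤ ↔ ∀ n, α ∈ C n) := by
  intro k
  induction k with
  | zero =>
    intro C hC
    have hOp : ∀ n, Op (C n) := fun n => SIG_zero_iff.mp (hC n)
    exact ⟨T0 C, RK.succ (fun m => fm0 C m) (fun m => RK.zero (fm0_locCst C m))
      (fun α => fm0_Cv C hOp α), fun α => T0_top_iff C α⟩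
  | succ k ih =>
    intro C hC
    choose E hE hCeq using fun n => SIG_succ_iff.mp (hC n)
    choose g hgRK hgspec using fun n => ih (E n) (hE n)
    have hkey : ∀ n α, (g n α = ⊤) ↔ α ∉ C n := by
      intro n α
      rw [hgspec n α, hCeq n]
      simp only [Set.mem_iUnion, Set.mem_compl_iff, not_exists, not_not]
    refine ⟨TS g, RK.succ (fun m => fmS g m) (fun m => fmS_RK (k+1) g hgRK m)
      (fun α => fmS_Cv g α), fun α => ?_⟩
    rw [TS_top_iff]
    refine forall_congr' (fun n => ?_)
    rw [← not_not (a := α ∈ C n)]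
    exact not_congr (hkey n α)



/-! ### powers of two -/

lemma two_zpow_pos (K : ℕ) : (0:ℝ) < (2:ℝ) ^ (-(K:ℤ)) := zpow_pos (by norm_num) _

lemma exists_pow_small (ε : ℝ) (hε : 0 < ε) : ∃ K : ℕ, (2:ℝ) ^ (-(K:ℤ)) < ε := by
  obtain ⟨K, hK⟩ := exists_pow_lt_of_lt_one hε (by norm_num : (1/2 : ℝ) < 1)
  refine ⟨K, ?_⟩
  have : (2:ℝ) ^ (-(K:ℤ)) = (1/2 : ℝ) ^ K := by
    rw [zpow_neg, zpow_natCast, one_div, inv_pow]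
  rw [this]
  exact hK

lemma two_zpow_mono {K K' : ℕ} (h : K ≤ K') : (2:ℝ) ^ (-(K':ℤ)) ≤ (2:ℝ) ^ (-(K:ℤ)) := by
  apply zpow_le_zpow_right₀ (by norm_num : (1:ℝ) ≤ 2)
  omega

/-! ### the name gadget -/

lemma iterLimVec_congr {D k : ℕ} {q q' : ℕ → EuclideanSpace ℝ (Fin D)}
    (h : ∀ n, q n = q' n) {x : EuclideanSpace ℝ (Fin D)} (hq : IterLimVec D k q x) :
    IterLimVec D k q' x := (funext h) ▸ hq

def toE {D : ℕ} (q : Fin D → ℚ) : EuclideanSpace ℝ (Fin D) := WithLp.toLp 2 (fun i => ((q i : ℝ)))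

section Gadget

variable {D : ℕ} (pt : ℕ∞ → EuclideanSpace ℝ (Fin D))
  (apx : EuclideanSpace ℝ (Fin D) → ℕ → (Fin D → ℚ))

lemma gadget
    (hpt : ∀ (K : ℕ) (v : ℕ∞), (K : ℕ∞) ≤ v → dist (pt v) (pt ⊤) ≤ (2:ℝ)^(-(K:ℤ)))
    (hapx : ∀ y n, dist y (toE (apx y n))
      ≤ (2:ℝ)^(-(n:ℤ))) :
    ∀ (k : ℕ) (T : B → ℕ∞), RK (k+1) T →
    ∃ Θ : B → ℕ → (Fin D → ℚ),
      (∀ i, LocCst (fun α => Θ α i)) ∧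
      ∀ α, IterLimVec D k (fun n => toE (Θ α n))
        (pt (T α)) := by
  intro k
  induction k with
  | zero =>
    intro T hT
    rcases RK_succ_iff.mp hT with ⟨S, hS, hCv⟩
    refine ⟨fun α n => apx (pt (S n α)) n, ?_, ?_⟩
    · intro i α
      rcases (RK_zero_iff.mp (hS i)) α with ⟨N, hN⟩
      refine ⟨N, fun β hβ => ?_⟩
      show apx (pt (S i β)) i = apx (pt (S i α)) i
      rw [show S i β = S i α from hN β hβ]
    · intro α
      show Filter.Tendsto _ Filter.atTop (nhds (pt (T α)))
      rw [Metric.tendsto_atTop]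
      intro ε hε
      obtain ⟨K, hK⟩ : ∃ K : ℕ, (2:ℝ)^(-(K:ℤ)) < ε/2 := exists_pow_small _ (by linarith)
      have key : ∀ n, K ≤ n → dist (pt (S n α)) (pt (T α)) < ε/2 →
          dist (toE (apx (pt (S n α)) n)) (pt (T α)) < ε := by
        intro n hn hd
        have h2 := dist_triangle (toE (apx (pt (S n α)) n)) (pt (S n α)) (pt (T α))
        have h3 : dist (toE (apx (pt (S n α)) n)) (pt (S n α)) ≤ (2:ℝ)^(-(n:ℤ)) := by
          rw [dist_comm]; exact hapx (pt (S n α)) n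
        have h4 : (2:ℝ)^(-(n:ℤ)) < ε/2 := lt_of_le_of_lt (two_zpow_mono hn) hK
        linarith
      by_cases htop : T α = ⊤
      · rcases (hCv α).1 htop K with ⟨N, hN⟩
        refine ⟨max N K, fun n hn => key n (le_trans (le_max_right _ _) hn) ?_⟩
        rw [htop]
        exact lt_of_le_of_lt (hpt K (S n α) (hN n (le_trans (le_max_left _ _) hn))) hK
      · rcases (hCv α).2 htop with ⟨N, hN⟩
        refine ⟨max N K, fun n hn => key n (le_trans (le_max_right _ _) hn) ?_⟩
        have h5 : S n α = T α := hN n (le_trans (le_max_left _ _) hn)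
        rw [h5, dist_self]
        linarith
  | succ k ih =>
    intro T hT
    rcases RK_succ_iff.mp hT with ⟨S, hS, hCv⟩
    choose Θr hΘr1 hΘr2 using fun n => ih (S n) (hS n)
    refine ⟨fun α j => Θr (Nat.unpair j).1 α ((Nat.unpair j).2), ?_, ?_⟩
    · intro j α
      rcases hΘr1 (Nat.unpair j).1 ((Nat.unpair j).2) α with ⟨N, hN⟩
      exact ⟨N, fun β hβ => hN β hβ⟩
    · intro α
      show IterLimVec D (k+1) _ _
      refine ⟨fun n => pt (S n α), fun n => ?_, ?_⟩
      · refine iterLimVec_congr (fun m => ?_) (hΘr2 n α)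
        show toE (Θr n α m) = toE (Θr (Nat.unpair (Nat.pair n m)).1 α ((Nat.unpair (Nat.pair n m)).2))
        simp only [Nat.unpair_pair]
      · rw [Metric.tendsto_atTop]
        intro ε hε
        obtain ⟨K, hK⟩ : ∃ K : ℕ, (2:ℝ)^(-(K:ℤ)) < ε := exists_pow_small _ hε
        by_cases htop : T α = ⊤
        · rcases (hCv α).1 htop K with ⟨N, hN⟩
          refine ⟨N, fun n hn => ?_⟩
          show dist (pt (S n α)) (pt (T α)) < ε
          rw [htop]
          exact lt_of_le_of_lt (hpt K (S n α) (hN n hn)) hK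
        · rcases (hCv α).2 htop with ⟨N, hN⟩
          refine ⟨N, fun n hn => ?_⟩
          show dist (pt (S n α)) (pt (T α)) < ε
          have h5 : S n α = T α := hN n hn
          rw [h5, dist_self]
          exact hε

end Gadget


/-! ### classification of alternating sup/inf values -/

lemma alt_zero_true (q : ℕ → EReal) : AltSupInf 0 true q = ⨆ n, q n := by
  simp [AltSupInf]

lemma alt_zero_false (q : ℕ → EReal) : AltSupInf 0 false q = ⨅ n, q n := by
  simp [AltSupInf]

lemma alt_succ_true (k : ℕ) (q : ℕ → EReal) :
    AltSupInf (k+1) true q = ⨆ n, AltSupInf k false (fun m => q (Nat.pair n m)) := by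
  simp [AltSupInf]

lemma alt_succ_false (k : ℕ) (q : ℕ → EReal) :
    AltSupInf (k+1) false q = ⨅ n, AltSupInf k true (fun m => q (Nat.pair n m)) := by
  simp [AltSupInf]

lemma erat_le_of_forall_lt {q : ℚ} {V : EReal}
    (h : ∀ q' : ℚ, ((q' : ℝ) : EReal) < ((q : ℝ) : EReal) → ((q' : ℝ) : EReal) < V) :
    ((q : ℝ) : EReal) ≤ V := by
  by_contra hc
  push_neg at hc
  rcases EReal.exists_rat_btwn_of_lt hc with ⟨q', h1, h2⟩
  exact absurd (h q' h2) (not_lt.mpr (le_of_lt h1))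

section AltClass

variable (v : B → ℕ → ℚ)

noncomputable def VE (α : B) (r : ℕ → ℕ) : ℕ → EReal := fun m => ((v α (r m) : ℝ) : EReal)

lemma altClass (hv : ∀ i, LocCst (fun α => v α i)) : ∀ k : ℕ,
    (∀ (r : ℕ → ℕ) (c : EReal), SIG k {α | c < AltSupInf k true (VE v α r)}) ∧
    (∀ (r : ℕ → ℕ) (c : EReal), SIG (k+1) {α | c < AltSupInf k false (VE v α r)}) := by
  intro k
  induction k with
  | zero =>
    constructor
    · intro r c
      refine SIG.zero ?_
      intro α hα
      rw [Set.mem_setOf_eq, alt_zero_true] at hα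
      rcases lt_iSup_iff.mp hα with ⟨m, hm⟩
      rcases hv (r m) α with ⟨N, hN⟩
      refine ⟨N, fun β hβ => ?_⟩
      rw [Set.mem_setOf_eq, alt_zero_true]
      refine lt_iSup_iff.mpr ⟨m, ?_⟩
      show c < ((v β (r m) : ℝ) : EReal)
      rw [show v β (r m) = v α (r m) from hN β hβ]
      exact hm
    · intro r c
      have heq : {α | c < AltSupInf 0 false (VE v α r)}
          = ⋃ (q : ℚ), ({α | ¬ (c < ((q:ℝ):EReal) ∧
              ∀ m, ((q:ℝ):EReal) ≤ VE v α r m)})ᶜ := by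
        ext α
        simp only [Set.mem_iUnion, Set.mem_compl_iff, Set.mem_setOf_eq, not_not]
        rw [alt_zero_false]
        constructor
        · intro h
          rcases EReal.exists_rat_btwn_of_lt h with ⟨q, h1, h2⟩
          exact ⟨q, h1, fun m => le_of_lt (lt_of_lt_of_le h2 (iInf_le _ m))⟩
        · rintro ⟨q, h1, h2⟩
          exact lt_of_lt_of_le h1 (le_iInf h2)
      rw [heq]
      refine SIG_succ_enc (fun q => SIG.zero ?_)
      intro α hα
      rw [Set.mem_setOf_eq] at hα
      by_cases hcq : c < ((q:ℝ):EReal)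
      · have hex : ∃ m, ¬ (((q:ℝ):EReal) ≤ VE v α r m) := by
          by_contra hall
          push_neg at hall
          exact hα ⟨hcq, hall⟩
        rcases hex with ⟨m, hm⟩
        rcases hv (r m) α with ⟨N, hN⟩
        refine ⟨N, fun β hβ => ?_⟩
        rw [Set.mem_setOf_eq]
        rintro ⟨_, hall⟩
        refine hm ?_
        have h5 := hall m
        show ((q:ℝ):EReal) ≤ ((v α (r m) : ℝ):EReal)
        rw [← show v β (r m) = v α (r m) from hN β hβ]
        exact h5
      · exact ⟨0, fun β _ => by
          rw [Set.mem_setOf_eq]; rintro ⟨h1, _⟩; exact hcq h1⟩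
  | succ k ih =>
    obtain ⟨Pt, Pf⟩ := ih
    constructor
    · intro r c
      have heq : {α | c < AltSupInf (k+1) true (VE v α r)}
          = ⋃ n, {α | c < AltSupInf k false (VE v α (fun m => r (Nat.pair n m)))} := by
        ext α
        simp only [Set.mem_iUnion, Set.mem_setOf_eq]
        rw [alt_succ_true]
        exact lt_iSup_iff
      rw [heq]
      exact SIG_iUnion (fun n => Pf (fun m => r (Nat.pair n m)) c)
    · intro r c
      have heq : {α | c < AltSupInf (k+1) false (VE v α r)}
          = ⋃ (q : ℚ), ({α | ¬ (c < ((q:ℝ):EReal) ∧ ∀ p : ℕ × ℚ,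
              ((p.2:ℝ):EReal) < ((q:ℝ):EReal) →
              ((p.2:ℝ):EReal) < AltSupInf k true
                (VE v α (fun m => r (Nat.pair p.1 m))))})ᶜ := by
        ext α
        simp only [Set.mem_iUnion, Set.mem_compl_iff, Set.mem_setOf_eq, not_not]
        rw [alt_succ_false]
        constructor
        · intro h
          rcases EReal.exists_rat_btwn_of_lt h with ⟨q, h1, h2⟩
          refine ⟨q, h1, fun p hp => ?_⟩
          exact lt_of_lt_of_le hp (le_of_lt (lt_of_lt_of_le h2 (iInf_le _ p.1)))
        · rintro ⟨q, h1, h2⟩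
          refine lt_of_lt_of_le h1 (le_iInf (fun n => ?_))
          exact erat_le_of_forall_lt (fun q' hq' => h2 (n, q') hq')
      rw [heq]
      refine SIG_succ_enc (fun q => ?_)
      by_cases hcq : c < ((q:ℝ):EReal)
      · have heq2 : {α | ¬ (c < ((q:ℝ):EReal) ∧ ∀ p : ℕ × ℚ,
            ((p.2:ℝ):EReal) < ((q:ℝ):EReal) →
            ((p.2:ℝ):EReal) < AltSupInf k true (VE v α (fun m => r (Nat.pair p.1 m))))}
            = ⋃ (p : ℕ × ℚ), ({α | ((p.2:ℝ):EReal) < ((q:ℝ):EReal) →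
              ((p.2:ℝ):EReal) < AltSupInf k true
                (VE v α (fun m => r (Nat.pair p.1 m)))})ᶜ := by
          ext α
          simp only [Set.mem_iUnion, Set.mem_compl_iff, Set.mem_setOf_eq, hcq, true_and,
            not_forall]
        rw [heq2]
        refine SIG_succ_enc (fun p => ?_)
        by_cases hpq : ((p.2:ℝ):EReal) < ((q:ℝ):EReal)
        · have heq3 : {α | ((p.2:ℝ):EReal) < ((q:ℝ):EReal) →
              ((p.2:ℝ):EReal) < AltSupInf k true (VE v α (fun m => r (Nat.pair p.1 m)))}
              = {α | ((p.2:ℝ):EReal) < AltSupInf k true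
                  (VE v α (fun m => r (Nat.pair p.1 m)))} := by
            ext α; simp [hpq]
          rw [heq3]
          exact Pt _ _
        · have heq3 : {α | ((p.2:ℝ):EReal) < ((q:ℝ):EReal) →
              ((p.2:ℝ):EReal) < AltSupInf k true (VE v α (fun m => r (Nat.pair p.1 m)))}
              = Set.univ := by
            ext α; simp [hpq]
          rw [heq3]
          exact SIG_univ _
      · have heq2 : {α | ¬ (c < ((q:ℝ):EReal) ∧ ∀ p : ℕ × ℚ,
            ((p.2:ℝ):EReal) < ((q:ℝ):EReal) →
            ((p.2:ℝ):EReal) < AltSupInf k true (VE v α (fun m => r (Nat.pair p.1 m))))}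
            = Set.univ := by
          ext α; simp [hcq]
        rw [heq2]
        exact SIG_univ _

end AltClass


/-! ### rational approximations in Euclidean space -/

lemma apx_exists (D : ℕ) : ∃ apx : EuclideanSpace ℝ (Fin D) → ℕ → (Fin D → ℚ),
    ∀ y n, dist y (toE (apx y n)) ≤ (2:ℝ)^(-(n:ℤ)) / 2 := by
  have key : ∀ (y : EuclideanSpace ℝ (Fin D)) (n : ℕ), ∃ q : Fin D → ℚ,
      dist y (toE q) ≤ (2:ℝ)^(-(n:ℤ)) / 2 := by
    intro y n
    set δ : ℝ := ((2:ℝ)^(-(n:ℤ)) / 2) / (D+1) with hδdef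
    have hδpos : 0 < δ := by
      have := two_zpow_pos n
      positivity
    have hq : ∀ i : Fin D, ∃ q : ℚ, |y i - (q:ℝ)| < δ := fun i => exists_rat_near (y i) hδpos
    choose q hqs using hq
    refine ⟨q, ?_⟩
    have hdist : dist y (toE q) = Real.sqrt (∑ i, dist (y i) (toE q i)^2) :=
      EuclideanSpace.dist_eq y (toE q)
    rw [hdist]
    have hsum : (∑ i, dist (y i) (toE q i)^2) ≤ (D:ℝ) * δ^2 := by
      have hb : ∀ i ∈ Finset.univ (α := Fin D), dist (y i) (toE q i)^2 ≤ δ^2 := by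
        intro i _
        have habs : dist (y i) (toE q i) ≤ δ := by
          rw [Real.dist_eq]; exact le_of_lt (hqs i)
        exact pow_le_pow_left₀ dist_nonneg habs 2
      calc (∑ i, dist (y i) (toE q i)^2) ≤ Finset.univ.card • δ^2 :=
            Finset.sum_le_card_nsmul _ _ _ hb
        _ = (D:ℝ) * δ^2 := by
            simp [nsmul_eq_mul]
    have h1 : Real.sqrt (∑ i, dist (y i) (toE q i)^2) ≤ Real.sqrt ((D:ℝ) * δ^2) :=
      Real.sqrt_le_sqrt hsum
    have h2 : (D:ℝ) * δ^2 ≤ (((D:ℝ)+1) * δ)^2 := by nlinarith [sq_nonneg δ, hδpos.le]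
    have h3 : Real.sqrt ((D:ℝ) * δ^2) ≤ ((D:ℝ)+1) * δ := by
      rw [show ((D:ℝ)+1)*δ = Real.sqrt ((((D:ℝ)+1)*δ)^2) from
        (Real.sqrt_sq (by positivity)).symm]
      exact Real.sqrt_le_sqrt h2
    have h4 : ((D:ℝ)+1) * δ = (2:ℝ)^(-(n:ℤ))/2 := by
      rw [hδdef]
      field_simp
    linarith
  choose apx hapx using fun y => key y
  exact ⟨apx, hapx⟩

/-! ### the point map -/

noncomputable def ptF {D : ℕ} (x : EuclideanSpace ℝ (Fin D))
    (u : ℕ → EuclideanSpace ℝ (Fin D)) (v : ℕ∞) : EuclideanSpace ℝ (Fin D) :=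
  if h : v = ⊤ then x else u v.toNat

lemma ptF_top {D : ℕ} (x : EuclideanSpace ℝ (Fin D)) (u : ℕ → EuclideanSpace ℝ (Fin D)) :
    ptF x u ⊤ = x := dif_pos rfl

lemma ptF_ne {D : ℕ} (x : EuclideanSpace ℝ (Fin D)) (u : ℕ → EuclideanSpace ℝ (Fin D))
    {v : ℕ∞} (h : v ≠ ⊤) : ptF x u v = u v.toNat := dif_neg h

lemma ptF_dist {D : ℕ} {x : EuclideanSpace ℝ (Fin D)} {u : ℕ → EuclideanSpace ℝ (Fin D)}
    (hud : ∀ j, dist (u j) x ≤ (2:ℝ)^(-(j:ℤ))) :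
    ∀ (K : ℕ) (v : ℕ∞), (K:ℕ∞) ≤ v → dist (ptF x u v) (ptF x u ⊤) ≤ (2:ℝ)^(-(K:ℤ)) := by
  intro K v hv
  rw [ptF_top]
  by_cases h : v = ⊤
  · rw [h, ptF_top, dist_self]
    exact le_of_lt (two_zpow_pos K)
  · rw [ptF_ne x u h]
    have hKj : K ≤ v.toNat := by
      rw [← ENat.coe_toNat h] at hv
      exact_mod_cast hv
    exact le_trans (hud v.toNat) (two_zpow_mono hKj)

/-! ### locality of continuous functionals -/

lemma locF {D : ℕ} {F : (ℕ → (Fin D → ℚ)) → (ℕ → ℚ)} {Sset : Set (ℕ → (Fin D → ℚ))}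
    (hF : ContinuousOn F Sset) {p : ℕ → (Fin D → ℚ)} (hp : p ∈ Sset) (i : ℕ) :
    ∃ N : ℕ, ∀ q ∈ Sset, (∀ j, j < N → q j = p j) → F q i = F p i := by
  have h1 : ContinuousWithinAt F Sset p := hF p hp
  have h2 : IsOpen ((fun y : ℕ → ℚ => y i) ⁻¹' {F p i}) := by
    have hc : Continuous (fun y : ℕ → ℚ => y i) := continuous_apply i
    exact hc.isOpen_preimage {F p i} (isOpen_discrete _)
  have h3 : F ⁻¹' ((fun y : ℕ → ℚ => y i) ⁻¹' {F p i}) ∈ nhdsWithin p Sset :=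
    h1.preimage_mem_nhdsWithin (h2.mem_nhds rfl)
  rcases mem_nhdsWithin.mp h3 with ⟨O, hO, hpO, hsub⟩
  rcases isOpen_pi_iff.mp hO p hpO with ⟨I, uu, hIu, hpi⟩
  refine ⟨(I.sup id) + 1, fun q hq hagr => ?_⟩
  have hmem : q ∈ (I : Set ℕ).pi uu := by
    intro j hj
    have hjI : j ∈ I := hj
    have hqp : q j = p j := hagr j (Nat.lt_succ_of_le (Finset.le_sup (f := id) hjI))
    rw [hqp]
    exact (hIu j hjI).2
  have := hsub ⟨hpi hmem, hq⟩
  simpa using this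

lemma locG {D : ℕ} {F : (ℕ → (Fin D → ℚ)) → (ℕ → ℚ)} {Sset : Set (ℕ → (Fin D → ℚ))}
    (hF : ContinuousOn F Sset) {Θ : B → ℕ → (Fin D → ℚ)}
    (hΘ : ∀ i, LocCst (fun α => Θ α i)) (hmem : ∀ α, Θ α ∈ Sset) (i : ℕ) :
    LocCst (fun α => F (Θ α) i) := by
  intro α
  rcases locF hF (hmem α) i with ⟨N, hN⟩
  have hM : ∀ j, ∃ M, ∀ β, Agr M α β → Θ β j = Θ α j := fun j => hΘ j α
  choose M hMs using hM
  refine ⟨(Finset.range N).sup M, fun β hβ => ?_⟩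
  refine hN (Θ β) (hmem β) (fun j hj => ?_)
  exact hMs j β (Agr.mono (Finset.le_sup (Finset.mem_range.mpr hj)) hβ)


lemma two_zpow_succ (n : ℕ) : (2:ℝ)^(-((n+1:ℕ):ℤ)) = (2:ℝ)^(-(n:ℤ))/2 := by
  have h : (-((n+1:ℕ):ℤ)) = (-(n:ℤ)) - 1 := by push_cast; ring
  rw [h, zpow_sub₀ (by norm_num : (2:ℝ) ≠ 0), zpow_one]

lemma itl_self (α : B) : itl α α = ren (fun j => j / 2) α := by
  funext j
  by_cases h : j % 2 = 0 <;> simp [itl, ren, h]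

lemma ren_ren (σ τ : ℕ → ℕ) (α : B) : ren σ (ren τ α) = ren (fun i => τ (σ i)) α := rfl

end Stmt10

open Stmt10

/-- For open `X ⊆ ℝ^D` and `d ≥ 0`: if `f : X → ℝ` is
(ρ^{(d)}→ρ_<^{(d)})-continuous, then `f` is lower semicontinuous on `X`. -/
theorem stmt10 (D : ℕ) (X : Set (EuclideanSpace ℝ (Fin D))) (hX : IsOpen X)
    (d : ℕ) (f : EuclideanSpace ℝ (Fin D) → ℝ)
    (h : ∃ F : (ℕ → (Fin D → ℚ)) → (ℕ → ℚ),
        ContinuousOn F {p | ∃ x ∈ X, IsRhoKVecName D d p x} ∧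
        ∀ x ∈ X, ∀ p, IsRhoKVecName D d p x → IsRhoLtKName d (F p) (f x)) :
    LowerSemicontinuousOn f X := by
  rcases h with ⟨F, hFc, hFv⟩
  intro x hx t ht
  by_contra hcon
  have hfreq : ∃ᶠ y in nhdsWithin x X, ¬ t < f y := Filter.not_eventually.mp hcon
  have hfreq2 : ∃ᶠ y in nhdsWithin x X, (¬ t < f y) ∧ y ∈ X :=
    hfreq.and_eventually eventually_mem_nhdsWithin
  have hbad : ∀ j : ℕ, ∃ y, (¬ t < f y) ∧ y ∈ X ∧ dist y x ≤ (2:ℝ)^(-(j:ℤ)) := by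
    intro j
    have hball : Metric.ball x ((2:ℝ)^(-(j:ℤ))) ∈ nhdsWithin x X :=
      mem_nhdsWithin_of_mem_nhds (Metric.ball_mem_nhds x (two_zpow_pos j))
    rcases Filter.frequently_iff.mp hfreq2 hball with ⟨y, hy1, hy2, hy3⟩
    exact ⟨y, hy2, hy3, le_of_lt (Metric.mem_ball.mp hy1)⟩
  choose u hut huX hud using hbad
  obtain ⟨apx, hapx2⟩ := apx_exists D
  have hapx : ∀ y n, dist y (toE (apx y n)) ≤ (2:ℝ)^(-(n:ℤ)) := by
    intro y n
    have h1 := hapx2 y n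
    have h2 := two_zpow_pos n
    linarith
  cases d with
  | zero =>
    have hp0name : IsRhoKVecName D 0 (fun n => apx x n) x := by
      intro n
      show dist x (toE (apx x n)) ≤ _
      have h1 := hapx2 x n
      have h2 := two_zpow_pos n
      linarith
    have hp0mem : (fun n => apx x n) ∈ {p | ∃ x' ∈ X, IsRhoKVecName D 0 p x'} :=
      ⟨x, hx, hp0name⟩
    have hval : (f x : EReal) = AltSupInf 0 true (fun n => ((F (fun n => apx x n) n : ℝ) : EReal)) :=
      hFv x hx _ hp0name
    have hlt : (t:EReal) < AltSupInf 0 true (fun n => ((F (fun n => apx x n) n : ℝ) : EReal)) := by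
      rw [← hval]
      exact_mod_cast ht
    rw [alt_zero_true] at hlt
    rcases lt_iSup_iff.mp hlt with ⟨n₀, hn₀⟩
    rcases locF hFc hp0mem n₀ with ⟨N, hN⟩
    have hquname : IsRhoKVecName D 0
        (fun n => if n < N then apx x n else apx (u N) n) (u N) := by
      intro n
      show dist (u N) (toE (if n < N then apx x n else apx (u N) n)) ≤ _
      by_cases hn : n < N
      · rw [if_pos hn]
        have h1 : dist (u N) (toE (apx x n)) ≤ dist (u N) x + dist x (toE (apx x n)) :=
          dist_triangle _ _ _
        have h2 : dist (u N) x ≤ (2:ℝ)^(-(N:ℤ)) := hud N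
        have h3 : dist x (toE (apx x n)) ≤ (2:ℝ)^(-(n:ℤ))/2 := hapx2 x n
        have h4 : (2:ℝ)^(-(N:ℤ)) ≤ (2:ℝ)^(-(n:ℤ))/2 := by
          rw [← two_zpow_succ n]
          exact two_zpow_mono (by omega)
        linarith
      · rw [if_neg hn]
        have h1 := hapx2 (u N) n
        have h2 := two_zpow_pos n
        linarith
    have hqumem : (fun n => if n < N then apx x n else apx (u N) n)
        ∈ {p | ∃ x' ∈ X, IsRhoKVecName D 0 p x'} := ⟨u N, huX N, hquname⟩
    have hagr : ∀ j, j < N →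
        (fun n => if n < N then apx x n else apx (u N) n) j = (fun n => apx x n) j := by
      intro j hj
      simp [hj]
    have hFeq : F (fun n => if n < N then apx x n else apx (u N) n) n₀
        = F (fun n => apx x n) n₀ := hN _ hqumem hagr
    have hval2 : (f (u N) : EReal) = AltSupInf 0 true
        (fun n => ((F (fun n => if n < N then apx x n else apx (u N) n) n : ℝ) : EReal)) :=
      hFv (u N) (huX N) _ hquname
    have hcontra : (t:EReal) < (f (u N) : EReal) := by
      rw [hval2, alt_zero_true]
      refine lt_of_lt_of_le ?_ (le_iSup _ n₀)
      show (t:EReal) < ((F (fun n => if n < N then apx x n else apx (u N) n) n₀ : ℝ) : EReal)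
      rw [hFeq]
      exact hn₀
    exact hut N (by exact_mod_cast hcontra)
  | succ k =>
    have hptd := ptF_dist (x := x) (u := u) hud
    have hptX : ∀ v, ptF x u v ∈ X := by
      intro v
      by_cases hv : v = ⊤
      · rw [hv, ptF_top]; exact hx
      · rw [ptF_ne x u hv]; exact huX _
    have hPcSIG : ∀ n, SIG k {α | ren (fun i => (σ2 n i) / 2) α ∈ U k} :=
      fun n => SIG_preim_ren (SIG_U k) _
    obtain ⟨T, hTRK, hTspec⟩ := REAL k _ hPcSIG
    obtain ⟨Θ, hΘloc, hΘname⟩ := gadget (ptF x u) apx hptd hapx k T hTRK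
    have hname : ∀ α, IsRhoKVecName D (k+1) (Θ α) (ptF x u (T α)) := fun α => hΘname α
    have hmem : ∀ α, Θ α ∈ {p | ∃ x' ∈ X, IsRhoKVecName D (k+1) p x'} :=
      fun α => ⟨ptF x u (T α), hptX _, hname α⟩
    have hv : ∀ i, LocCst (fun α => F (Θ α) i) := fun i => locG hFc hΘloc hmem i
    have hAD : ∀ α, ((t:EReal) < AltSupInf (k+1) true (VE (fun α i => F (Θ α) i) α id))
        ↔ (itl α α ∉ U (k+1)) := by
      intro α
      have hval : (f (ptF x u (T α)) : EReal)
          = AltSupInf (k+1) true (fun n => ((F (Θ α) n : ℝ) : EReal)) :=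
        hFv _ (hptX _) _ (hname α)
      have hDiff : (T α = ⊤) ↔ (itl α α ∉ U (k+1)) := by
        rw [hTspec α]
        constructor
        · intro hall hU
          rcases Set.mem_iUnion.mp hU with ⟨n, hn⟩
          refine hn ?_
          show ren (σ2 n) (itl α α) ∈ U k
          rw [itl_self, ren_ren]
          exact hall n
        · intro hU n
          show ren (fun i => (σ2 n i) / 2) α ∈ U k
          by_contra hne
          refine hU (Set.mem_iUnion.mpr ⟨n, fun hmem2 => hne ?_⟩)
          have hmem3 : ren (σ2 n) (itl α α) ∈ U k := hmem2
          rw [itl_self, ren_ren] at hmem3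
          exact hmem3
      constructor
      · intro hA
        rw [← hDiff]
        by_contra hTne
        have hfle : ¬ t < f (ptF x u (T α)) := by
          rw [ptF_ne x u hTne]
          exact hut _
        have hlt2 : (t:EReal) < (f (ptF x u (T α)) : EReal) := by
          rw [hval]; exact hA
        exact hfle (by exact_mod_cast hlt2)
      · intro hD
        have hTtop : T α = ⊤ := hDiff.mpr hD
        have hlt2 : (t:EReal) < (f (ptF x u (T α)) : EReal) := by
          rw [hTtop, ptF_top]
          exact_mod_cast ht
        rw [hval] at hlt2
        exact hlt2
    have hSIG : SIG (k+1)
        {α | (t:EReal) < AltSupInf (k+1) true (VE (fun α i => F (Θ α) i) α id)} :=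
      (altClass (fun α i => F (Θ α) i) hv (k+1)).1 id (t:EReal)
    have heq : {α | (t:EReal) < AltSupInf (k+1) true (VE (fun α i => F (Θ α) i) α id)}
        = {α | itl α α ∉ U (k+1)} := Set.ext (fun α => hAD α)
    rw [heq] at hSIG
    exact DIAG (k+1) hSIG
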